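/- Let Λ be a compact invariant set of a C¹ flow on a compact manifold that is both positively and negatively sectional-hyperbolic. Then Λ is almost hyperbolic: there exist continuous invariant contracting and expanding subbundles E^s and E^u of T_ΛM with T_xM = E^s_x ⊕ ⟨X(x)⟩ ⊕ E^u_x at every regular point x of Λ, and every singularity in Λ is hyperbolic. -/

import Mathlib

open Real Set Filter Metric RealInnerProductSpace

noncomputable section

/-- The 2-norm (areal metric): the area of the parallelogram spanned by `u` and `v`. -/
def area2 {V : Type*} [NormedAddCommGroup V] [InnerProductSpace ℝ V] (u v : V) : ℝ :=
  Real.sqrt (⟪u, u⟫ * ⟪v, v⟫ - ⟪u, v⟫ ^ 2)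

/-- A `C¹` flow on the space `V`, together with its generating vector field. -/
structure CFlow (V : Type*) [NormedAddCommGroup V] [InnerProductSpace ℝ V] where
  /-- the generating vector field -/
  X : V → V
  /-- the flow map -/
  φ : ℝ → V → V
  smooth : ContDiff ℝ 1 (Function.uncurry φ)
  map_zero : ∀ x, φ 0 x = x
  map_add : ∀ s t x, φ (s + t) x = φ s (φ t x)
  deriv_eq : ∀ x t, HasDerivAt (fun s => φ s x) (X (φ t x)) t

namespace CFlow

variable {V : Type*} [NormedAddCommGroup V] [InnerProductSpace ℝ V] (f : CFlow V)

/-- Derivative cocycle `DX_t(x)`. -/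
def D (t : ℝ) (x : V) : V →L[ℝ] V := fderiv ℝ (f.φ t) x

/-- The time-reversed flow `-X`. -/
def reverse : CFlow V where
  X := fun x => -f.X x
  φ := fun t x => f.φ (-t) x
  smooth := f.smooth.comp (ContDiff.prodMk (contDiff_fst.neg) contDiff_snd)
  map_zero := fun x => f.map_zero x |>.symm ▸ by simp [f.map_zero]
  map_add := fun s t x => by
    show f.φ (-(s + t)) x = _
    rw [neg_add]; exact f.map_add (-s) (-t) x
  deriv_eq := fun x t => by
    have h := (f.deriv_eq x (-t)).scomp t (hasDerivAt_neg t)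
    simpa [Function.comp_def] using h

/-- Invariance of a set under the flow. -/
def Invariant (Λ : Set V) : Prop := ∀ t, f.φ t '' Λ = Λ

/-- The orbit of a point. -/
def orbit (x : V) : Set V := Set.range fun t => f.φ t x

/-- The ω-limit set of a point. -/
def omegaLim (x : V) : Set V := ⋂ T : ℝ, closure {y | ∃ t, T ≤ t ∧ f.φ t x = y}

/-- The α-limit set of a point. -/
def alphaLim (x : V) : Set V := ⋂ T : ℝ, closure {y | ∃ t, t ≤ T ∧ f.φ t x = y}

/-- A transitive set: the ω-limit set of one of its points. -/
def Transitive (Λ : Set V) : Prop := ∃ x ∈ Λ, f.omegaLim x = Λ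

/-- A singularity (zero) of the vector field. -/
def IsSing (σ : V) : Prop := f.X σ = 0

/-- Invariance of a family of subspaces under the derivative cocycle. -/
def SubInvariant (Λ : Set V) (E : V → Submodule ℝ V) : Prop :=
  ∀ x ∈ Λ, ∀ t : ℝ, (E x).map (f.D t x).toLinearMap = E (f.φ t x)

/-- Continuity of a subbundle over `Λ`, encoded by a continuous family of
projections onto its fibers. -/
def ContinuousSub (Λ : Set V) (E : V → Submodule ℝ V) : Prop :=
  ∃ P : V → V →L[ℝ] V, ContinuousOn P Λ ∧
    ∀ x ∈ Λ, LinearMap.range (P x).toLinearMap = E x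

/-- Uniform contraction of a subbundle. -/
def Contracting (Λ : Set V) (E : V → Submodule ℝ V) (K lam : ℝ) : Prop :=
  ∀ x ∈ Λ, ∀ v ∈ E x, ∀ t : ℝ, 0 ≤ t →
    ‖f.D t x v‖ ≤ K * Real.exp (-lam * t) * ‖v‖

/-- Uniform expansion of a subbundle. -/
def Expanding (Λ : Set V) (E : V → Submodule ℝ V) (K lam : ℝ) : Prop :=
  ∀ x ∈ Λ, ∀ v ∈ E x, ∀ t : ℝ, 0 ≤ t →
    ‖f.D t x v‖ ≥ K⁻¹ * Real.exp (lam * t) * ‖v‖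

/-- Domination of the splitting `E ⊕ F`. -/
def Dominated (Λ : Set V) (E F : V → Submodule ℝ V) (K lam : ℝ) : Prop :=
  ∀ x ∈ Λ, ∀ t : ℝ, 0 ≤ t → ∀ e ∈ E x, ∀ u ∈ F x,
    ‖f.D t x e‖ * ‖u‖ ≤ K * Real.exp (-lam * t) * ‖f.D t x u‖ * ‖e‖

/-- Sectional expansion: uniform exponential growth of areas of parallelograms
of pairs of vectors in the central subbundle. -/
def SectionallyExpanding (Λ : Set V) (F : V → Submodule ℝ V) (K lam : ℝ) : Prop :=
  ∀ x ∈ Λ, ∀ u ∈ F x, ∀ v ∈ F x, ∀ t : ℝ, 0 ≤ t →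
    area2 (f.D t x u) (f.D t x v) ≥ K⁻¹ * Real.exp (lam * t) * area2 u v

/-- A hyperbolic singularity: hyperbolic splitting `T_σM = Fs ⊕ Fu`
invariant under the derivative cocycle, with contraction and expansion. -/
def IsHyperbolicSing (σ : V) : Prop :=
  f.IsSing σ ∧ ∃ (Fs Fu : Submodule ℝ V) (K lam : ℝ), 0 < K ∧ 0 < lam ∧
    IsCompl Fs Fu ∧
    (∀ t, Fs.map (f.D t σ).toLinearMap = Fs) ∧
    (∀ t, Fu.map (f.D t σ).toLinearMap = Fu) ∧
    (∀ v ∈ Fs, ∀ t : ℝ, 0 ≤ t → ‖f.D t σ v‖ ≤ K * Real.exp (-lam * t) * ‖v‖) ∧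
    (∀ v ∈ Fu, ∀ t : ℝ, 0 ≤ t → ‖f.D t σ v‖ ≥ K⁻¹ * Real.exp (lam * t) * ‖v‖)

/-- Internal direct sum of three subspaces. -/
def IsTripleSplitting (A B C : Submodule ℝ V) : Prop :=
  A ⊓ (B ⊔ C) = ⊥ ∧ B ⊓ C = ⊥ ∧ A ⊔ B ⊔ C = ⊤

/-- A hyperbolic set: compact invariant set with a continuous invariant
splitting `Es ⊕ ⟨X⟩ ⊕ Eu`, `Es` contracting and `Eu` expanding. -/
def IsHyperbolicSet (Λ : Set V) : Prop :=
  IsCompact Λ ∧ f.Invariant Λ ∧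
  ∃ (Es Eu : V → Submodule ℝ V) (K lam : ℝ), 0 < K ∧ 0 < lam ∧
    ContinuousSub Λ Es ∧ ContinuousSub Λ Eu ∧
    f.SubInvariant Λ Es ∧ f.SubInvariant Λ Eu ∧
    f.Contracting Λ Es K lam ∧ f.Expanding Λ Eu K lam ∧
    ∀ x ∈ Λ, IsTripleSplitting (Es x) (Submodule.span ℝ {f.X x}) (Eu x)

/-- A sectional-hyperbolic splitting over `Λ`: a continuous invariant
dominated splitting `E ⊕ F` with `E` contracting and `F` sectionally expanding. -/
def SectionalHyperbolicSplitting (Λ : Set V) (E F : V → Submodule ℝ V) : Prop :=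
  ∃ K lam : ℝ, 0 < K ∧ 0 < lam ∧
    ContinuousSub Λ E ∧ ContinuousSub Λ F ∧
    f.SubInvariant Λ E ∧ f.SubInvariant Λ F ∧
    (∀ x ∈ Λ, IsCompl (E x) (F x)) ∧
    f.Dominated Λ E F K lam ∧
    f.Contracting Λ E K lam ∧
    f.SectionallyExpanding Λ F K lam

/-- A (positively) sectional-hyperbolic set for the flow `f`. -/
def PositivelySectionalHyperbolic (Λ : Set V) : Prop :=
  IsCompact Λ ∧ f.Invariant Λ ∧
  (∀ σ ∈ Λ, f.IsSing σ → f.IsHyperbolicSing σ) ∧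
  ∃ E F : V → Submodule ℝ V, f.SectionalHyperbolicSplitting Λ E F

/-- A negatively sectional-hyperbolic set: sectional-hyperbolic for `-X`. -/
def NegativelySectionalHyperbolic (Λ : Set V) : Prop :=
  f.reverse.PositivelySectionalHyperbolic Λ

/-- An almost hyperbolic set (Definition 3.1). -/
def AlmostHyperbolic (Λ : Set V) : Prop :=
  IsCompact Λ ∧ f.Invariant Λ ∧
  (∀ σ ∈ Λ, f.IsSing σ → f.IsHyperbolicSing σ) ∧
  ∃ (Es Eu : V → Submodule ℝ V) (K lam : ℝ), 0 < K ∧ 0 < lam ∧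
    ContinuousSub Λ Es ∧ ContinuousSub Λ Eu ∧
    f.SubInvariant Λ Es ∧ f.SubInvariant Λ Eu ∧
    f.Contracting Λ Es K lam ∧ f.Expanding Λ Eu K lam ∧
    ∀ x ∈ Λ, f.X x ≠ 0 →
      IsTripleSplitting (Es x) (Submodule.span ℝ {f.X x}) (Eu x)

/-- The stable manifold of a singularity. -/
def stableSet (σ : V) : Set V := {x | Tendsto (fun t => f.φ t x) atTop (nhds σ)}

/-- The unstable manifold of a singularity. -/
def unstableSet (σ : V) : Set V := {x | Tendsto (fun t => f.φ t x) atBot (nhds σ)}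

/-!
Write `Es ⊕ Ese` and `Eu ⊕ Esc` for the sectional-hyperbolic splittings of `X` and of `-X`.
Pulled back along the flow, the `Es`-component of a vector is blown up by contraction and
dominates the `Ese`-component, so a vector whose backward orbit under `DX_t` stays bounded lies
in `Ese`; this applies to `X` (bounded on the compact `Λ`) and to `Eu`, and symmetrically
`X ∈ Esc`. A vector of `Ese ∩ Esc` off the line `⟨X⟩` would span with `X` a parallelogram
whose area is expanded in both time directions, so `Ese ∩ Esc = ⟨X⟩` at regular points. The
modular law then gives `Ese = ⟨X⟩ ⊕ Eu`, whence `T_xM = Es ⊕ ⟨X⟩ ⊕ Eu`.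
-/

@[simp] lemma reverse_X (x : V) : f.reverse.X x = -f.X x := rfl

@[simp] lemma reverse_φ (t : ℝ) (x : V) : f.reverse.φ t x = f.φ (-t) x := rfl

@[simp] lemma reverse_D (t : ℝ) (x : V) : f.reverse.D t x = f.D (-t) x := rfl

lemma φ_neg_φ (t : ℝ) (x : V) : f.φ (-t) (f.φ t x) = x := by
  rw [← f.map_add, neg_add_cancel, f.map_zero]

lemma differentiable_φ (t : ℝ) : Differentiable ℝ (f.φ t) :=
  (f.smooth.comp (contDiff_const.prodMk contDiff_id)).differentiable one_ne_zero

lemma D_zero (x : V) : f.D 0 x = ContinuousLinearMap.id ℝ V := by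
  simp only [D, show f.φ 0 = id from funext f.map_zero, fderiv_id]

lemma D_apply_D (s t : ℝ) (x v : V) : f.D t (f.φ s x) (f.D s x v) = f.D (t + s) x v := by
  have hcomp : f.φ (t + s) = f.φ t ∘ f.φ s := funext (f.map_add t s)
  simp only [D, hcomp, fderiv_comp x (f.differentiable_φ t _) (f.differentiable_φ s _)]
  rfl

lemma D_neg_apply_D (t : ℝ) (x v : V) : f.D (-t) (f.φ t x) (f.D t x v) = v := by
  rw [D_apply_D, neg_add_cancel, D_zero, ContinuousLinearMap.id_apply]

lemma D_apply_D_neg (t : ℝ) (x v : V) : f.D t (f.φ (-t) x) (f.D (-t) x v) = v := by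
  rw [D_apply_D, add_neg_cancel, D_zero, ContinuousLinearMap.id_apply]

lemma D_apply_X (t : ℝ) (x : V) : f.D t x (f.X x) = f.X (f.φ t x) := by
  have hX : HasDerivAt (fun s => f.φ s x) (f.X x) 0 := by
    simpa [f.map_zero] using f.deriv_eq x 0
  have hD : HasFDerivAt (f.φ t) (f.D t x) (f.φ 0 x) := by
    rw [f.map_zero]
    exact (f.differentiable_φ t x).hasFDerivAt
  have hshift : HasDerivAt (fun s => f.φ (t + s) x) (f.X (f.φ t x)) 0 :=
    HasDerivAt.comp_const_add t 0 (by rw [add_zero]; exact f.deriv_eq x t)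
  simp only [f.map_add] at hshift
  exact (hD.comp_hasDerivAt 0 hX).unique hshift

lemma continuous_X : Continuous f.X := by
  have hX : f.X = fun x => fderiv ℝ (Function.uncurry f.φ) (0, x) (1, 0) := by
    funext x
    have hline : HasDerivAt (fun s : ℝ => ((s, x) : ℝ × V)) ((1 : ℝ), (0 : V)) 0 :=
      (hasDerivAt_id (0 : ℝ)).prodMk (hasDerivAt_const (0 : ℝ) x)
    refine (HasDerivAt.unique (by simpa [f.map_zero] using f.deriv_eq x 0) ?_)
    exact ((f.smooth.differentiable one_ne_zero) (0, x)).hasFDerivAt.comp_hasDerivAt 0 hline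
  rw [hX]
  exact ((f.smooth.continuous_fderiv one_ne_zero).comp
    (continuous_const.prodMk continuous_id)).clm_apply continuous_const

section Bundles

variable {f} {Λ : Set V} {E : V → Submodule ℝ V} {K lam : ℝ}

lemma Invariant.φ_mem (hinv : f.Invariant Λ) {x : V} (hx : x ∈ Λ) (t : ℝ) :
    f.φ t x ∈ Λ :=
  hinv t ▸ Set.mem_image_of_mem _ hx

lemma Invariant.reverse (hinv : f.Invariant Λ) : f.reverse.Invariant Λ :=
  fun t => hinv (-t)

lemma SubInvariant.mem (hE : f.SubInvariant Λ E) {x v : V} (hx : x ∈ Λ) (hv : v ∈ E x)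
    (t : ℝ) : f.D t x v ∈ E (f.φ t x) :=
  hE x hx t ▸ Submodule.mem_map_of_mem hv

lemma SubInvariant.of_reverse (hE : f.reverse.SubInvariant Λ E) : f.SubInvariant Λ E := by
  intro x hx t
  simpa using hE x hx (-t)

lemma Contracting.mono {K' lam' : ℝ} (hE : f.Contracting Λ E K lam) (hK : 0 ≤ K)
    (hKK' : K ≤ K') (hlam' : lam' ≤ lam) : f.Contracting Λ E K' lam' := by
  intro x hx v hv t ht
  refine (hE x hx v hv t ht).trans (mul_le_mul_of_nonneg_right ?_ (norm_nonneg v))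
  exact mul_le_mul hKK' (Real.exp_le_exp.mpr (by nlinarith)) (Real.exp_pos _).le (hK.trans hKK')

lemma Expanding.mono {K' lam' : ℝ} (hE : f.Expanding Λ E K lam) (hK : 0 < K)
    (hKK' : K ≤ K') (hlam' : lam' ≤ lam) : f.Expanding Λ E K' lam' := by
  intro x hx v hv t ht
  refine le_trans (mul_le_mul_of_nonneg_right ?_ (norm_nonneg v)) (hE x hx v hv t ht)
  exact mul_le_mul (inv_anti₀ hK hKK') (Real.exp_le_exp.mpr (by nlinarith)) (Real.exp_pos _).le
    (inv_nonneg.mpr hK.le)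

lemma Contracting.norm_le (hE : f.Contracting Λ E K lam) (hK : 0 ≤ K) (hlam : 0 ≤ lam)
    {x v : V} (hx : x ∈ Λ) (hv : v ∈ E x) {t : ℝ} (ht : 0 ≤ t) :
    ‖f.D t x v‖ ≤ K * ‖v‖ := by
  simpa using (hE.mono hK le_rfl hlam) x hx v hv t ht

lemma Contracting.expanding_of_reverse (hE : f.reverse.Contracting Λ E K lam)
    (hinv : f.Invariant Λ) (hEi : f.SubInvariant Λ E) (hK : 0 < K) :
    f.Expanding Λ E K lam := by
  intro x hx v hv t ht
  have h := hE _ (hinv.φ_mem hx t) _ (hEi.mem hx hv t) t ht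
  rw [reverse_D, D_neg_apply_D] at h
  calc K⁻¹ * Real.exp (lam * t) * ‖v‖
      ≤ K⁻¹ * Real.exp (lam * t) * (K * Real.exp (-lam * t) * ‖f.D t x v‖) := by gcongr
    _ = ‖f.D t x v‖ := by field_simp; simp [← Real.exp_add]

end Bundles

lemma nonpos_of_forall_mul_exp_le {a C lam : ℝ} (hlam : 0 < lam)
    (h : ∀ t : ℝ, 0 ≤ t → a * Real.exp (lam * t) ≤ C) : a ≤ 0 := by
  by_contra! ha
  have hgrow : Tendsto (fun t => a * Real.exp (lam * t)) atTop atTop :=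
    (Real.tendsto_exp_atTop.comp (tendsto_id.const_mul_atTop hlam)).const_mul_atTop ha
  obtain ⟨t, hC, ht⟩ := ((hgrow.eventually_gt_atTop C).and (eventually_ge_atTop 0)).exists
  exact (h t ht).not_gt hC

section Domination

variable {f} {Λ : Set V} {E F : V → Submodule ℝ V} {K lam : ℝ}

lemma norm_mul_exp_le_of_bounded_backward (hK : 0 ≤ K) (hinv : f.Invariant Λ)
    (hEi : f.SubInvariant Λ E) (hFi : f.SubInvariant Λ F) (hcontr : f.Contracting Λ E K lam)
    (hdom : f.Dominated Λ E F K lam) {x e u : V} (hx : x ∈ Λ) (he : e ∈ E x) (hu : u ∈ F x)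
    {t M : ℝ} (ht : 0 ≤ t) (hM : ‖f.D (-t) x (e + u)‖ ≤ M) :
    ‖e‖ * Real.exp (lam * t) ≤ K * (‖u‖ + M) := by
  set y := f.φ (-t) x
  have hy : y ∈ Λ := hinv.φ_mem hx (-t)
  have hcontr_y := hcontr y hy _ (hEi.mem hx he (-t)) t ht
  have hdom_y := hdom y hy t ht _ (hEi.mem hx he (-t)) _ (hFi.mem hx hu (-t))
  rw [D_apply_D_neg] at hcontr_y
  rw [D_apply_D_neg, D_apply_D_neg] at hdom_y
  rw [_root_.map_add] at hM
  have hu_y : ‖f.D (-t) x e‖ - M ≤ ‖f.D (-t) x u‖ := by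
    linarith [norm_le_add_norm_add (f.D (-t) x e) (f.D (-t) x u)]
  have hM0 : 0 ≤ M := (norm_nonneg _).trans hM
  -- at time `-t` the `E`-part is `e^{λt}`-large by contraction and dominates the `F`-part,
  -- so the two cannot cancel down to norm `≤ M`
  have hbound : ‖e‖ ≤ K * Real.exp (-lam * t) * (‖u‖ + M) := by
    set c := K * Real.exp (-lam * t)
    have hc : 0 ≤ c := by positivity
    by_cases hsmall : ‖e‖ ≤ c * ‖u‖
    · nlinarith
    · have hd : 0 < ‖e‖ - c * ‖u‖ := sub_pos.mpr (not_le.mp hsmall)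
      have hpull : ‖f.D (-t) x e‖ * (‖e‖ - c * ‖u‖) ≤ ‖e‖ * M := by
        nlinarith [mul_le_mul_of_nonneg_left hu_y (norm_nonneg e)]
      have hd_le : ‖e‖ * (‖e‖ - c * ‖u‖) ≤ ‖e‖ * (c * M) := by
        nlinarith [mul_le_mul_of_nonneg_right hcontr_y hd.le, mul_le_mul_of_nonneg_left hpull hc]
      nlinarith [le_of_mul_le_mul_left hd_le (by nlinarith [mul_nonneg hc (norm_nonneg u)])]
  calc ‖e‖ * Real.exp (lam * t)
      ≤ K * Real.exp (-lam * t) * (‖u‖ + M) * Real.exp (lam * t) := by gcongr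
    _ = K * (‖u‖ + M) := by
      rw [mul_right_comm, mul_assoc K, ← Real.exp_add]; simp

end Domination

lemma _root_.area2_nonneg (u v : V) : 0 ≤ area2 u v := Real.sqrt_nonneg _

lemma _root_.mem_span_of_area2_eq_zero {v w : V} (hw : w ≠ 0) (h : area2 v w = 0) :
    v ∈ Submodule.span ℝ {w} := by
  rw [area2, Real.sqrt_eq_zero', real_inner_self_eq_norm_sq, real_inner_self_eq_norm_sq,
    real_inner_comm, sub_nonpos, ← mul_pow, mul_comm] at h
  have hcs : |⟪w, v⟫| = ‖w‖ * ‖v‖ :=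
    (abs_real_inner_le_norm w v).antisymm
      (by simpa [abs_of_nonneg (by positivity : 0 ≤ ‖w‖ * ‖v‖)] using sq_le_sq.mp h)
  have hdep : w = 0 ∨ v ∈ ℝ ∙ w := ((norm_inner_eq_norm_tfae ℝ w v).out 0 3).mp hcs
  exact hdep.resolve_left hw

lemma isTripleSplitting_of_isCompl {Es Ese Eu Esc L : Submodule ℝ V} (hpos : IsCompl Es Ese)
    (hneg : IsCompl Eu Esc) (hEu : Eu ≤ Ese) (hL : Ese ⊓ Esc = L) :
    IsTripleSplitting Es L Eu := by
  have hEse : Ese = L ⊔ Eu := by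
    have hmod := sup_inf_assoc_of_le Esc hEu
    rwa [hneg.sup_eq_top, top_inf_eq, inf_comm, hL, sup_comm] at hmod
  refine ⟨hEse ▸ hpos.inf_eq_bot, ?_, by rw [sup_assoc, ← hEse]; exact hpos.sup_eq_top⟩
  rw [eq_bot_iff, ← hneg.inf_eq_bot, inf_comm Eu]
  exact inf_le_inf_right Eu (hL ▸ inf_le_right)

section SectionalHyperbolic

variable {f} {Λ : Set V} {E F : V → Submodule ℝ V}

lemma SectionalHyperbolicSplitting.mem_right_of_bounded_backward
    (h : f.SectionalHyperbolicSplitting Λ E F) (hinv : f.Invariant Λ) {x v : V} (hx : x ∈ Λ)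
    {M : ℝ} (hM : ∀ t : ℝ, 0 ≤ t → ‖f.D (-t) x v‖ ≤ M) : v ∈ F x := by
  obtain ⟨K, lam, hK, hlam, -, -, hEi, hFi, hcompl, hdom, hcontr, -⟩ := h
  have hv : v ∈ E x ⊔ F x := (hcompl x hx).sup_eq_top ▸ Submodule.mem_top
  obtain ⟨e, he, u, hu, rfl⟩ := Submodule.mem_sup.mp hv
  have he0 : ‖e‖ ≤ 0 := nonpos_of_forall_mul_exp_le hlam fun t ht =>
    norm_mul_exp_le_of_bounded_backward hK.le hinv hEi hFi hcontr hdom hx he hu ht (hM t ht)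
  rwa [norm_le_zero_iff.mp he0, zero_add]

lemma SectionalHyperbolicSplitting.X_mem (h : f.SectionalHyperbolicSplitting Λ E F)
    (hΛ : IsCompact Λ) (hinv : f.Invariant Λ) {x : V} (hx : x ∈ Λ) : f.X x ∈ F x := by
  obtain ⟨M, hM⟩ := hΛ.exists_bound_of_continuousOn f.continuous_X.continuousOn
  refine h.mem_right_of_bounded_backward hinv hx (M := M) fun t _ => ?_
  rw [D_apply_X]
  exact hM _ (hinv.φ_mem hx (-t))

lemma SectionalHyperbolicSplitting.le_right_of_reverse {Eu Esc : V → Submodule ℝ V}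
    (hpos : f.SectionalHyperbolicSplitting Λ E F)
    (hneg : f.reverse.SectionalHyperbolicSplitting Λ Eu Esc) (hinv : f.Invariant Λ)
    {x : V} (hx : x ∈ Λ) : Eu x ≤ F x := by
  obtain ⟨K, lam, hK, hlam, -, -, -, -, -, -, hcontr, -⟩ := hneg
  intro v hv
  exact hpos.mem_right_of_bounded_backward hinv hx fun t ht => by
    simpa using hcontr.norm_le hK.le hlam.le hx hv ht

lemma SectionalHyperbolicSplitting.inf_reverse_eq_span {Es Ese Eu Esc : V → Submodule ℝ V}
    (hpos : f.SectionalHyperbolicSplitting Λ Es Ese)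
    (hneg : f.reverse.SectionalHyperbolicSplitting Λ Eu Esc) (hΛ : IsCompact Λ)
    (hinv : f.Invariant Λ) {x : V} (hx : x ∈ Λ) (hX : f.X x ≠ 0) :
    Ese x ⊓ Esc x = Submodule.span ℝ {f.X x} := by
  have hXse : f.X x ∈ Ese x := hpos.X_mem hΛ hinv hx
  have hXsc : ∀ y ∈ Λ, f.X y ∈ Esc y := fun y hy => by
    simpa using hneg.X_mem hΛ hinv.reverse hy
  refine le_antisymm (fun v hv => ?_) ((Submodule.span_singleton_le_iff_mem _ _).mpr
    ⟨hXse, hXsc x hx⟩)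
  obtain ⟨K, lam, hK, hlam, -, -, -, -, -, -, -, hsec⟩ := hpos
  obtain ⟨Kh, lamh, hKh, hlamh, -, -, -, hEsc, -, -, -, hsech⟩ := hneg
  -- the parallelogram spanned by `v` and `X` is expanded forward by `f` and backward by `-X`
  refine mem_span_of_area2_eq_zero hX ((nonpos_of_forall_mul_exp_le (add_pos hlam hlamh)
    (C := K * Kh * area2 v (f.X x)) fun t ht => ?_).antisymm (area2_nonneg _ _))
  have hy : f.φ t x ∈ Λ := hinv.φ_mem hx t
  have hfwd := hsec x hx v hv.1 _ hXse t ht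
  have hbwd := hsech _ hy _ (hEsc.of_reverse.mem hx hv.2 t) _ (hXsc _ hy) t ht
  rw [D_apply_X] at hfwd
  rw [reverse_D, D_neg_apply_D, D_apply_X, φ_neg_φ] at hbwd
  calc area2 v (f.X x) * Real.exp ((lam + lamh) * t)
      = K * Kh * (Kh⁻¹ * Real.exp (lamh * t) *
          (K⁻¹ * Real.exp (lam * t) * area2 v (f.X x))) := by
        rw [add_mul, Real.exp_add]; field_simp
    _ ≤ K * Kh * (Kh⁻¹ * Real.exp (lamh * t) * area2 (f.D t x v) (f.X (f.φ t x))) := by gcongr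
    _ ≤ K * Kh * area2 v (f.X x) := by gcongr

end SectionalHyperbolic

variable [FiniteDimensional ℝ V]

/-- Lemma 3.4 (thA): every compact invariant set which is both positively and
negatively sectional-hyperbolic is almost hyperbolic. -/
theorem stmt13 (f : CFlow V) (Λ : Set V)
    (hpos : f.PositivelySectionalHyperbolic Λ)
    (hneg : f.NegativelySectionalHyperbolic Λ) :
    f.AlmostHyperbolic Λ := by
  obtain ⟨hΛ, hinv, hsing, Es, Ese, hsplit⟩ := hpos
  obtain ⟨-, -, -, Eu, Esc, hsplit'⟩ := hneg
  have hEu : ∀ x ∈ Λ, Eu x ≤ Ese x := fun x hx => hsplit.le_right_of_reverse hsplit' hinv hx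
  have hcenter : ∀ x ∈ Λ, f.X x ≠ 0 → Ese x ⊓ Esc x = Submodule.span ℝ {f.X x} :=
    fun x hx => hsplit.inf_reverse_eq_span hsplit' hΛ hinv hx
  obtain ⟨K, lam, hK, hlam, hEs_cont, -, hEs_inv, -, hcompl, -, hcontr, -⟩ := hsplit
  obtain ⟨K', lam', hK', hlam', hEu_cont, -, hEu_inv, -, hcompl', -, hcontr', -⟩ := hsplit'
  refine ⟨hΛ, hinv, hsing, Es, Eu, max K K', min lam lam', lt_max_of_lt_left hK,
    lt_min hlam hlam', hEs_cont, hEu_cont, hEs_inv, hEu_inv.of_reverse, ?_, ?_, fun x hx hX => ?_⟩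
  · exact hcontr.mono hK.le (le_max_left _ _) (min_le_left _ _)
  · exact (hcontr'.expanding_of_reverse hinv hEu_inv.of_reverse hK').mono hK'
      (le_max_right _ _) (min_le_right _ _)
  · exact isTripleSplitting_of_isCompl (hcompl x hx) (hcompl' x hx) (hEu x hx) (hcenter x hx hX)

end CFlow
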